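/- Let Ω ⊆ ℝⁿ be open, let f : Ω → ℝⁿ and A, B, M, N : Ω → ℝ be C¹ with ∂A/∂uⁱ = Σ_k (∂B/∂u^k)(∂f^k/∂uⁱ) and ∂M/∂uⁱ = Σ_k (∂N/∂u^k)(∂f^k/∂uⁱ) on Ω, and set p(u) = (1, u, B(u), N(u), 0), r(u) = (0, f(u), A(u), M(u), 1) ∈ ℝ^{n+4}. If u₀ ∈ Ω, λ₀ ∈ ℝ, and ξ ∈ ℝⁿ satisfy Df(u₀) ξ = λ₀ ξ, then Dr(u₀)[ξ] = λ₀ · Dp(u₀)[ξ]. Consequently, if λ : Ω → ℝ is C¹ and ξ : Ω → ℝⁿ is a field with Df(u) ξ(u) = λ(u) ξ(u) on Ω, then the focal point map F = r − λ·p satisfies DF(u)[ξ(u)] = −(Dλ(u)[ξ(u)]) · p(u): along each rarefaction curve the focal submanifold is tangent to the corresponding line generator of the ruled hypersurface. -/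

import Mathlib

/-!
The compatibility relations say exactly that `DA = DB ∘ Df` and `DM = DN ∘ Df`. Hence on an
eigenvector `ξ` of `Df` every component of `Dr[ξ] = (0, Df ξ, DA ξ, DM ξ, 0)` is `λ` times the
corresponding component of `Dp[ξ] = (0, ξ, DB ξ, DN ξ, 0)`. For `F = r − λ p` the product rule
then leaves only `−(Dλ[ξ]) p`.
-/

open ContinuousLinearMap

theorem ContinuousLinearMap.apply_eq_sum_apply_single_mul {n : ℕ} (L : (Fin n → ℝ) →L[ℝ] ℝ)
    (v : Fin n → ℝ) : L v = ∑ k, L (Pi.single k 1) * v k := by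
  conv_lhs => rw [← Finset.univ_sum_single v]
  refine (map_sum L _ _).trans (Finset.sum_congr rfl fun k _ => ?_)
  rw [mul_comm, ← smul_eq_mul, ← map_smul, ← Pi.single_smul', smul_eq_mul, mul_one]

theorem ContinuousLinearMap.eq_comp_of_apply_single {n : ℕ}
    {a b : (Fin n → ℝ) →L[ℝ] ℝ} {g : (Fin n → ℝ) →L[ℝ] (Fin n → ℝ)}
    (h : ∀ i, a (Pi.single i 1) = ∑ k, b (Pi.single k 1) * g (Pi.single i 1) k) :
    a = b.comp g :=
  coe_injective <| (Pi.basisFun ℝ (Fin n)).ext fun i => by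
    rw [Pi.basisFun_apply, coe_coe, coe_coe, comp_apply, h, b.apply_eq_sum_apply_single_mul]

theorem fderiv_eq_comp_of_partials {n : ℕ} {f : (Fin n → ℝ) → Fin n → ℝ} {A B : (Fin n → ℝ) → ℝ}
    {u : Fin n → ℝ} (hf : DifferentiableAt ℝ f u)
    (h : ∀ i, fderiv ℝ A u (Pi.single i 1) =
      ∑ k, fderiv ℝ B u (Pi.single k 1) * fderiv ℝ (fun x => f x k) u (Pi.single i 1)) :
    fderiv ℝ A u = (fderiv ℝ B u).comp (fderiv ℝ f u) :=
  eq_comp_of_apply_single fun i => by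
    simpa only [fderiv_apply hf, comp_apply, proj_apply] using h i

section

variable {E F : Type*} [NormedAddCommGroup E] [NormedSpace ℝ E]
  [NormedAddCommGroup F] [NormedSpace ℝ F]

theorem differentiableAt_tuple {g : E → F} {a m : E → ℝ} {u : E} (c d : ℝ)
    (hg : DifferentiableAt ℝ g u) (ha : DifferentiableAt ℝ a u) (hm : DifferentiableAt ℝ m u) :
    DifferentiableAt ℝ (fun x => (c, g x, a x, m x, d)) u :=
  (differentiableAt_const c).prodMk (hg.prodMk (ha.prodMk (hm.prodMk (differentiableAt_const d))))

theorem fderiv_tuple_apply {g : E → F} {a m : E → ℝ} {u : E} (c d : ℝ)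
    (hg : DifferentiableAt ℝ g u) (ha : DifferentiableAt ℝ a u) (hm : DifferentiableAt ℝ m u)
    (v : E) :
    fderiv ℝ (fun x => (c, g x, a x, m x, d)) u v =
      (0, fderiv ℝ g u v, fderiv ℝ a u v, fderiv ℝ m u v, 0) := by
  rw [((hasFDerivAt_const c u).prodMk (hg.hasFDerivAt.prodMk (ha.hasFDerivAt.prodMk
    (hm.hasFDerivAt.prodMk (hasFDerivAt_const d u))))).fderiv]
  rfl

theorem fderiv_r_apply_eq_smul_fderiv_p {f : E → E} {A B M N : E → ℝ} {u ξ : E} {lam : ℝ}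
    (hf : DifferentiableAt ℝ f u) (hA : DifferentiableAt ℝ A u) (hB : DifferentiableAt ℝ B u)
    (hM : DifferentiableAt ℝ M u) (hN : DifferentiableAt ℝ N u)
    (hAB : fderiv ℝ A u = (fderiv ℝ B u).comp (fderiv ℝ f u))
    (hMN : fderiv ℝ M u = (fderiv ℝ N u).comp (fderiv ℝ f u))
    (hξ : fderiv ℝ f u ξ = lam • ξ) :
    fderiv ℝ (fun x => ((0 : ℝ), f x, A x, M x, (1 : ℝ))) u ξ =
      lam • fderiv ℝ (fun x => ((1 : ℝ), x, B x, N x, (0 : ℝ))) u ξ := by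
  rw [fderiv_tuple_apply _ _ hf hA hM,
    fderiv_tuple_apply (g := fun x => x) _ _ differentiableAt_id hB hN, hAB, hMN]
  simp [hξ]

theorem fderiv_sub_smul_apply_of_eq_smul {r p : E → F} {lam : E → ℝ} {u v : E}
    (hr : DifferentiableAt ℝ r u) (hp : DifferentiableAt ℝ p u) (hlam : DifferentiableAt ℝ lam u)
    (h : fderiv ℝ r u v = lam u • fderiv ℝ p u v) :
    fderiv ℝ (fun x => r x - lam x • p x) u v = -(fderiv ℝ lam u v) • p u := by
  rw [fderiv_fun_sub hr (hlam.fun_smul hp), fderiv_fun_smul hlam hp]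
  simp only [sub_apply, add_apply, smul_apply, smulRight_apply, h]
  module

end

/-- Let `f, A, B, M, N` be `C¹` on the open set `Ω` with the
conservation-law relations, and let `p(u) = (1, u, B, N, 0)`,
`r(u) = (0, f, A, M, 1)`. (1) If `Df(u₀)ξ = λ₀ξ` then
`Dr(u₀)[ξ] = λ₀ · Dp(u₀)[ξ]`. (2) Consequently, if `λ : Ω → ℝ` is `C¹` and `ξ`
is a field of eigenvectors, `Df(u)ξ(u) = λ(u)ξ(u)` on `Ω`, then the focal point
map `F = r − λ·p` satisfies `DF(u)[ξ(u)] = −(Dλ(u)[ξ(u)]) · p(u)`: along each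
rarefaction curve the focal submanifold is tangent to the corresponding line
generator of the ruled hypersurface. -/
theorem stmt_11
    (n : ℕ) (Ω : Set (Fin n → ℝ)) (hΩ : IsOpen Ω)
    (f : (Fin n → ℝ) → (Fin n → ℝ))
    (A B M N : (Fin n → ℝ) → ℝ)
    (hf : ContDiffOn ℝ 1 f Ω) (hA : ContDiffOn ℝ 1 A Ω)
    (hB : ContDiffOn ℝ 1 B Ω) (hM : ContDiffOn ℝ 1 M Ω)
    (hN : ContDiffOn ℝ 1 N Ω)
    (hAB : ∀ u ∈ Ω, ∀ i : Fin n,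
      fderiv ℝ A u (Pi.single i 1) =
        ∑ k : Fin n, fderiv ℝ B u (Pi.single k 1) *
          fderiv ℝ (fun x => f x k) u (Pi.single i 1))
    (hMN : ∀ u ∈ Ω, ∀ i : Fin n,
      fderiv ℝ M u (Pi.single i 1) =
        ∑ k : Fin n, fderiv ℝ N u (Pi.single k 1) *
          fderiv ℝ (fun x => f x k) u (Pi.single i 1))
    (p r : (Fin n → ℝ) → ℝ × (Fin n → ℝ) × ℝ × ℝ × ℝ)
    (hp : ∀ u, p u = (1, u, B u, N u, 0))
    (hr : ∀ u, r u = (0, f u, A u, M u, 1)) :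
    (∀ u₀ ∈ Ω, ∀ lam₀ : ℝ, ∀ ξ : Fin n → ℝ,
      fderiv ℝ f u₀ ξ = lam₀ • ξ →
      fderiv ℝ r u₀ ξ = lam₀ • fderiv ℝ p u₀ ξ) ∧
    (∀ lam : (Fin n → ℝ) → ℝ, ∀ ξ : (Fin n → ℝ) → (Fin n → ℝ),
      ContDiffOn ℝ 1 lam Ω →
      (∀ u ∈ Ω, fderiv ℝ f u (ξ u) = lam u • ξ u) →
      ∀ u ∈ Ω,
        fderiv ℝ (fun x => r x - lam x • p x) u (ξ u) =
          -(fderiv ℝ lam u (ξ u)) • p u) := by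
  obtain rfl : p = fun u => ((1 : ℝ), u, B u, N u, (0 : ℝ)) := funext hp
  obtain rfl : r = fun u => ((0 : ℝ), f u, A u, M u, (1 : ℝ)) := funext hr
  have hdiff {F : Type} [NormedAddCommGroup F] [NormedSpace ℝ F] {g : (Fin n → ℝ) → F}
      (hg : ContDiffOn ℝ 1 g Ω) {u} (hu : u ∈ Ω) : DifferentiableAt ℝ g u :=
    (hg.contDiffAt (hΩ.mem_nhds hu)).differentiableAt one_ne_zero
  have hdr : ∀ u ∈ Ω, ∀ lam₀ : ℝ, ∀ ξ : Fin n → ℝ, fderiv ℝ f u ξ = lam₀ • ξ →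
      fderiv ℝ (fun x => ((0 : ℝ), f x, A x, M x, (1 : ℝ))) u ξ =
        lam₀ • fderiv ℝ (fun x => ((1 : ℝ), x, B x, N x, (0 : ℝ))) u ξ := fun u hu _ _ hξ =>
    fderiv_r_apply_eq_smul_fderiv_p (hdiff hf hu) (hdiff hA hu) (hdiff hB hu) (hdiff hM hu)
      (hdiff hN hu) (fderiv_eq_comp_of_partials (hdiff hf hu) (hAB u hu))
      (fderiv_eq_comp_of_partials (hdiff hf hu) (hMN u hu)) hξ
  refine ⟨hdr, fun lam ξ hlam hξ u hu => fderiv_sub_smul_apply_of_eq_smul ?_ ?_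
    (hdiff hlam hu) (hdr u hu _ _ (hξ u hu))⟩
  · exact differentiableAt_tuple _ _ (hdiff hf hu) (hdiff hA hu) (hdiff hM hu)
  · exact differentiableAt_tuple _ _ differentiableAt_id (hdiff hB hu) (hdiff hN hu)
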